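/- In the Yokonuma–Hecke algebra Y_{d,n}(u), for every positive integer k: g_i^{-2k} = 1 + u^{-1}(u^{-1}-1)(sum_{l=0}^{k-1} u^{-2l}) p_i and g_i^{-2k+1} = g_i - (u^{-1}-1)(sum_{l=0}^{k-1} u^{-2l}) p_i, where p_i := e_i(1 - g_i). -/

import Mathlib

/-! The idempotent `e_i` is an averaged geometric sum `(1/d) ∑_{m<d} z^m` of `z = t_i t_{i+1}^{-1}`,
a `d`-th root of unity, so `e_i² = e_i`. The quadratic relation then reads `g² = 1 + (u-1) p`
with `p g = -u p`, hence `p g⁻¹ = -u⁻¹ p`, `g⁻² = 1 + u⁻¹(u⁻¹-1) p`, and the powers of `g⁻²`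
telescope into the geometric sum `∑ u^{-2l}`; the odd powers follow by multiplying with `g`. -/

open Finset

/-- The element `e_i = (1/d) * sum_{m=0}^{d-1} t_i^m t_{i+1}^{-m}` of the
Yokonuma--Hecke algebra; since `t_j^d = 1` we write `t_{i+1}^{-m} = t_{i+1}^{d-m}`. -/
noncomputable def eElt {A : Type*} [Ring A] [Algebra ℂ A] (d : ℕ) (t : ℕ → A) (i : ℕ) : A :=
  (d : ℂ)⁻¹ • ∑ m ∈ Finset.range d, t i ^ m * t (i + 1) ^ (d - m)

/-- The element `p_i := e_i (1 - g_i)`. -/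
noncomputable def pElt {A : Type*} [Ring A] [Algebra ℂ A] (d : ℕ) (t g : ℕ → A) (i : ℕ) : A :=
  eElt d t i * (1 - g i)

theorem geom_sum_mul_self_of_pow_eq_one {R : Type*} [Ring R] {z : R} {d : ℕ} (hz : z ^ d = 1) :
    (∑ m ∈ range d, z ^ m) * (∑ m ∈ range d, z ^ m) = d • ∑ m ∈ range d, z ^ m := by
  set S := ∑ m ∈ range d, z ^ m
  have hzS : z * S = S := by
    have := mul_geom_sum z d
    rwa [hz, sub_self, sub_mul, one_mul, sub_eq_zero] at this
  have hpowS : ∀ m, z ^ m * S = S := by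
    intro m
    induction m with
    | zero => rw [pow_zero, one_mul]
    | succ m ih => rw [pow_succ, mul_assoc, hzS, ih]
  rw [sum_mul, sum_congr rfl fun m _ => hpowS m, sum_const, card_range]

theorem Commute.pow_mul_pow_sub_eq_mul_pow_pred_pow {M : Type*} [Monoid M] {x y : M}
    (hxy : Commute x y) {d m : ℕ} (hy : y ^ d = 1) (hm : m ≤ d) :
    x ^ m * y ^ (d - m) = (x * y ^ (d - 1)) ^ m := by
  rw [(hxy.pow_right _).mul_pow, ← pow_mul]
  obtain ⟨r, rfl⟩ := Nat.exists_eq_add_of_le hm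
  cases m with
  | zero => simpa using hy
  | succ m =>
    have hexp : (m + 1 + r - 1) * (m + 1) = r + (m + 1 + r) * m := by
      rw [show m + 1 + r - 1 = m + r by omega]; ring
    rw [Nat.add_sub_cancel_left, hexp, pow_add y, pow_mul, hy, one_pow, mul_one]

theorem eElt_mul_self {A : Type*} [Ring A] [Algebra ℂ A] {d : ℕ} (hd : 0 < d) {t : ℕ → A} {i : ℕ}
    (hcomm : Commute (t i) (t (i + 1))) (hti : t i ^ d = 1) (hti1 : t (i + 1) ^ d = 1) :
    eElt d t i * eElt d t i = eElt d t i := by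
  set z := t i * t (i + 1) ^ (d - 1)
  have hz : z ^ d = 1 := by
    rw [← hcomm.pow_mul_pow_sub_eq_mul_pow_pred_pow hti1 le_rfl, hti, Nat.sub_self, pow_zero,
      one_mul]
  have he : eElt d t i = (d : ℂ)⁻¹ • ∑ m ∈ range d, z ^ m :=
    congrArg _ <| sum_congr rfl fun m hm =>
      hcomm.pow_mul_pow_sub_eq_mul_pow_pred_pow hti1 (mem_range.1 hm).le
  have hd' : (d : ℂ) ≠ 0 := Nat.cast_ne_zero.2 hd.ne'
  rw [he, smul_mul_smul_comm, geom_sum_mul_self_of_pow_eq_one hz, ← Nat.cast_smul_eq_nsmul ℂ,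
    smul_smul, mul_assoc, inv_mul_cancel₀ hd', mul_one]

section QuadraticRelation

variable {K A : Type*} [Field K] [Ring A] [Algebra K A] {u : K} {e g h p : A}

theorem mul_one_sub_mul_eq_neg_smul (he : e * e = e) (hg : g ^ 2 = 1 + (u - 1) • (e * (1 - g))) :
    e * (1 - g) * g = -(u • (e * (1 - g))) := by
  have hep : e * (e * (1 - g)) = e * (1 - g) := by rw [← mul_assoc, he]
  calc e * (1 - g) * g = e * g - e * g ^ 2 := by rw [mul_assoc, sub_mul, one_mul, mul_sub, sq]
    _ = e * g - e - (u - 1) • (e * (1 - g)) := by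
      rw [hg, mul_add, mul_one, mul_smul_comm, hep]; abel
    _ = -(u • (e * (1 - g))) := by rw [mul_one_sub]; module

theorem mul_eq_neg_inv_smul_of_mul_eq_one (hu : u ≠ 0) (hpg : p * g = -(u • p)) (hgh : g * h = 1) :
    p * h = (-u⁻¹) • p := by
  have hph : u • (p * h) = -p := by
    rw [← smul_mul_assoc, ← neg_neg (u • p), ← hpg, neg_mul, mul_assoc, hgh, mul_one]
  rw [← inv_smul_smul₀ hu (p * h), hph, smul_neg, neg_smul]

theorem mul_pow_eq_pow_smul_of_mul_eq_smul {x : A} {c : K} (hpx : p * x = c • p) (n : ℕ) :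
    p * x ^ n = c ^ n • p := by
  induction n with
  | zero => rw [pow_zero, pow_zero, mul_one, one_smul]
  | succ n ih => rw [pow_succ, ← mul_assoc, ih, smul_mul_assoc, hpx, smul_smul, ← pow_succ]

theorem sq_eq_one_add_smul_of_mul_eq_one (hu : u ≠ 0) (hg : g ^ 2 = 1 + (u - 1) • p)
    (hph : p * h = (-u⁻¹) • p) (hgh : g * h = 1) : h ^ 2 = 1 + (u⁻¹ * (u⁻¹ - 1)) • p := by
  have hph2 : p * h ^ 2 = (u⁻¹ * u⁻¹) • p := by
    rw [mul_pow_eq_pow_smul_of_mul_eq_smul hph 2, neg_sq, sq]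
  have hgh2 : g ^ 2 * h ^ 2 = 1 := by rw [sq, sq, mul_assoc, ← mul_assoc g h, hgh, one_mul, hgh]
  have hcoef : u⁻¹ * (u⁻¹ - 1) = -((u - 1) * (u⁻¹ * u⁻¹)) := by field_simp; ring
  rw [hg, add_mul, one_mul, smul_mul_assoc, hph2, smul_smul, ← eq_sub_iff_add_eq'] at hgh2
  rw [hcoef, neg_smul, hgh2]
  abel

theorem pow_two_mul_eq_one_add_smul_of_mul_eq_one (hu : u ≠ 0) (hg : g ^ 2 = 1 + (u - 1) • p)
    (hpg : p * g = -(u • p)) (hgh : g * h = 1) (k : ℕ) :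
    h ^ (2 * k) = 1 + (u⁻¹ * (u⁻¹ - 1) * ∑ l ∈ range k, u⁻¹ ^ (2 * l)) • p := by
  have hph := mul_eq_neg_inv_smul_of_mul_eq_one hu hpg hgh
  have hh2 := sq_eq_one_add_smul_of_mul_eq_one hu hg hph hgh
  induction k with
  | zero => simp
  | succ k ih =>
    have hphk : p * h ^ (2 * k) = u⁻¹ ^ (2 * k) • p := by
      rw [mul_pow_eq_pow_smul_of_mul_eq_smul hph, (even_two_mul k).neg_pow]
    rw [mul_add, mul_one, add_comm, pow_add, hh2, add_mul, one_mul, smul_mul_assoc, hphk, ih,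
      sum_range_succ]
    module

theorem pow_two_mul_sub_one_eq_sub_smul_of_mul_eq_one (hu : u ≠ 0) (hg : g ^ 2 = 1 + (u - 1) • p)
    (hpg : p * g = -(u • p)) (hgh : g * h = 1) (hhg : h * g = 1) {k : ℕ} (hk : 1 ≤ k) :
    h ^ (2 * k - 1) = g - ((u⁻¹ - 1) * ∑ l ∈ range k, u⁻¹ ^ (2 * l)) • p := by
  have hodd : h ^ (2 * k - 1) = h ^ (2 * k) * g := by
    rw [← Nat.sub_add_cancel (show 1 ≤ 2 * k by omega), pow_succ, mul_assoc, hhg, mul_one,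
      Nat.add_sub_cancel]
  rw [hodd, pow_two_mul_eq_one_add_smul_of_mul_eq_one hu hg hpg hgh, add_mul, one_mul,
    smul_mul_assoc, hpg, smul_neg, smul_smul, ← sub_eq_add_neg]
  congr 2
  field_simp

end QuadraticRelation

theorem yh_g_negative_powers_general {A : Type*} [Ring A] [Algebra ℂ A] (d n : ℕ) (u : ℂ)
    (hd : 0 < d) (hu0 : u ≠ 0) (g t : ℕ → A)
    (htt : ∀ i j, 1 ≤ i → i ≤ n → 1 ≤ j → j ≤ n → t i * t j = t j * t i)
    (htd : ∀ j, 1 ≤ j → j ≤ n → t j ^ d = 1)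
    (hquad : ∀ i, 1 ≤ i → i ≤ n - 1 →
      g i ^ 2 = 1 + (u - 1) • eElt d t i - (u - 1) • (eElt d t i * g i)) :
    ∀ i, 1 ≤ i → i ≤ n - 1 → ∀ h : A, g i * h = 1 → h * g i = 1 → ∀ k : ℕ, 1 ≤ k →
      h ^ (2 * k) = 1 + (u⁻¹ * (u⁻¹ - 1) * ∑ l ∈ Finset.range k, (u⁻¹) ^ (2 * l)) • pElt d t g i ∧
      h ^ (2 * k - 1) = g i - ((u⁻¹ - 1) * ∑ l ∈ Finset.range k, (u⁻¹) ^ (2 * l)) • pElt d t g i := by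
  intro i hi1 hi2 h hgh hhg k hk
  have he : eElt d t i * eElt d t i = eElt d t i :=
    eElt_mul_self hd (htt i (i + 1) hi1 (by omega) (by omega) (by omega)) (htd i hi1 (by omega))
      (htd (i + 1) (by omega) (by omega))
  have hg : g i ^ 2 = 1 + (u - 1) • pElt d t g i := by
    rw [hquad i hi1 hi2, pElt, mul_one_sub, smul_sub]; abel
  have hpg : pElt d t g i * g i = -(u • pElt d t g i) := mul_one_sub_mul_eq_neg_smul he hg
  exact ⟨pow_two_mul_eq_one_add_smul_of_mul_eq_one hu0 hg hpg hgh k,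
    pow_two_mul_sub_one_eq_sub_smul_of_mul_eq_one hu0 hg hpg hgh hhg hk⟩

theorem yh_g_negative_powers {A : Type*} [Ring A] [Algebra ℂ A] (d n : ℕ) (u : ℂ)
    (hd : 0 < d) (hu0 : u ≠ 0) (hu1 : u ≠ 1) (g t : ℕ → A)
    (hgcomm : ∀ i j, 1 ≤ i → i ≤ n - 1 → 1 ≤ j → j ≤ n - 1 → (i + 1 < j ∨ j + 1 < i) →
      g i * g j = g j * g i)
    (hbraid : ∀ i j, 1 ≤ i → i ≤ n - 1 → 1 ≤ j → j ≤ n - 1 → (j = i + 1 ∨ i = j + 1) →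
      g i * g j * g i = g j * g i * g j)
    (htt : ∀ i j, 1 ≤ i → i ≤ n → 1 ≤ j → j ≤ n → t i * t j = t j * t i)
    (htg : ∀ i j, 1 ≤ i → i ≤ n - 1 → 1 ≤ j → j ≤ n →
      t j * g i = g i * t (Equiv.swap i (i + 1) j))
    (htd : ∀ j, 1 ≤ j → j ≤ n → t j ^ d = 1)
    (hquad : ∀ i, 1 ≤ i → i ≤ n - 1 →
      g i ^ 2 = 1 + (u - 1) • eElt d t i - (u - 1) • (eElt d t i * g i)) :
    ∀ i, 1 ≤ i → i ≤ n - 1 → ∀ h : A, g i * h = 1 → h * g i = 1 → ∀ k : ℕ, 1 ≤ k →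
      h ^ (2 * k) = 1 + (u⁻¹ * (u⁻¹ - 1) * ∑ l ∈ Finset.range k, (u⁻¹) ^ (2 * l)) • pElt d t g i ∧
      h ^ (2 * k - 1) = g i - ((u⁻¹ - 1) * ∑ l ∈ Finset.range k, (u⁻¹) ^ (2 * l)) • pElt d t g i :=
  yh_g_negative_powers_general d n u hd hu0 g t htt htd hquad
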